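/- Let R be a ring and n a positive integer. A left R-module A is an n-syzygy module if and only if it is a Gorenstein n-syzygy module. -/

import Mathlib

universe u

open LinearMap

section GorensteinDefs

variable (S : Type u) [Ring S]

/-- A complete projective resolution: a doubly infinite exact sequence of projective
`S`-modules which stays exact after applying `Hom_S(-, Q)` for every projective module `Q`,
together with an identification of `G` with the image of the 0-th differential. -/
structure CompleteProjectiveResolution (G : Type u) [AddCommGroup G] [Module S G] where
  P : ℤ → Type u
  [acg : ∀ i, AddCommGroup (P i)]
  [mod : ∀ i, Module S (P i)]
  projective : ∀ i, Module.Projective S (P i)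
  d : ∀ i, P i →ₗ[S] P (i + 1)
  exact : ∀ i, LinearMap.range (d i) = LinearMap.ker (d (i + 1))
  homExact : ∀ (Q : Type u) [AddCommGroup Q] [Module S Q], Module.Projective S Q →
      ∀ i (f : P (i + 1) →ₗ[S] Q), f.comp (d i) = 0 →
        ∃ g : P (i + 1 + 1) →ₗ[S] Q, g.comp (d (i + 1)) = f
  equiv : Nonempty (G ≃ₗ[S] LinearMap.range (d 0))

attribute [instance] CompleteProjectiveResolution.acg CompleteProjectiveResolution.mod

/-- A module is Gorenstein projective if it admits a complete projective resolution. -/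
def IsGorensteinProjective (G : Type u) [AddCommGroup G] [Module S G] : Prop :=
  Nonempty (CompleteProjectiveResolution S G)

/-- An exact sequence `0 → G n → G (n-1) → ⋯ → G 1 → G 0 → M → 0` of `S`-modules,
encoded as an `ℕ`-indexed exact sequence whose entries in degrees `> n` are zero. -/
structure FiniteExactSequenceTo (M : Type u) [AddCommGroup M] [Module S M] (n : ℕ) where
  G : ℕ → Type u
  [acg : ∀ i, AddCommGroup (G i)]
  [mod : ∀ i, Module S (G i)]
  d : ∀ i, G (i + 1) →ₗ[S] G i
  aug : G 0 →ₗ[S] M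
  aug_surjective : Function.Surjective aug
  exact_aug : LinearMap.range (d 0) = LinearMap.ker aug
  exact : ∀ i, LinearMap.range (d (i + 1)) = LinearMap.ker (d i)
  trivial_of_gt : ∀ i, n < i → Subsingleton (G i)

attribute [instance] FiniteExactSequenceTo.acg FiniteExactSequenceTo.mod

/-- `M` admits an exact sequence `0 → G n → ⋯ → G 0 → M → 0` with all `G i`
Gorenstein projective. -/
def GorensteinProjectiveDimensionLE (M : Type u) [AddCommGroup M] [Module S M] (n : ℕ) : Prop :=
  ∃ E : FiniteExactSequenceTo S M n, ∀ i ≤ n, IsGorensteinProjective S (E.G i)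

/-- The Gorenstein projective dimension `Gpd_S(M)`, as an element of `ℕ∞`. -/
noncomputable def gpd (M : Type u) [AddCommGroup M] [Module S M] : ℕ∞ :=
  sInf {k : ℕ∞ | ∃ n : ℕ, k = n ∧ GorensteinProjectiveDimensionLE S M n}

/-- `M` admits an exact sequence `0 → P n → ⋯ → P 0 → M → 0` with all `P i` projective. -/
def ProjectiveDimensionLE (M : Type u) [AddCommGroup M] [Module S M] (n : ℕ) : Prop :=
  ∃ E : FiniteExactSequenceTo S M n, ∀ i ≤ n, Module.Projective S (E.G i)

/-- The projective dimension `pd_S(M)`, as an element of `ℕ∞`. -/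
noncomputable def pd (M : Type u) [AddCommGroup M] [Module S M] : ℕ∞ :=
  sInf {k : ℕ∞ | ∃ n : ℕ, k = n ∧ ProjectiveDimensionLE S M n}

end GorensteinDefs

/-- `A` is an `n`-syzygy module: there is an exact sequence
`0 → A → P_{n-1} → ⋯ → P₀ → M → 0` with all `P i` projective. -/
def IsNSyzygy (R : Type u) [Ring R] (n : ℕ) (A : Type u) [AddCommGroup A] [Module R A] : Prop :=
  ∃ (M : Type u) (_ : AddCommGroup M) (_ : Module R M) (E : FiniteExactSequenceTo R M n),
    (∀ i < n, Module.Projective R (E.G i)) ∧ Nonempty (A ≃ₗ[R] E.G n)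

/-- `A` is a Gorenstein `n`-syzygy module: there is an exact sequence
`0 → A → G_{n-1} → ⋯ → G₀ → M → 0` with all `G i` Gorenstein projective. -/
def IsGorensteinNSyzygy (R : Type u) [Ring R] (n : ℕ) (A : Type u)
    [AddCommGroup A] [Module R A] : Prop :=
  ∃ (M : Type u) (_ : AddCommGroup M) (_ : Module R M) (E : FiniteExactSequenceTo R M n),
    (∀ i < n, IsGorensteinProjective R (E.G i)) ∧ Nonempty (A ≃ₗ[R] E.G n)

/-!
Projective modules are Gorenstein projective, which gives one direction. For the converse let `𝒳`
be the closure of the Gorenstein projectives under extensions. Every `X ∈ 𝒳` satisfies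
`Ext¹(X, Q) = 0` for projective `Q` and, by the horseshoe lemma, embeds into a projective module
with cokernel in `𝒳`. One then shows by induction on `n`: if `C` is a Gorenstein `n`-syzygy and
`0 → C → C' → X → 0` is exact with `X ∈ 𝒳`, then `C'` is an `n`-syzygy. Indeed, write
`C ⊆ G` with `G` Gorenstein projective and `G/C` a Gorenstein `(n-1)`-syzygy, embed `G ⊆ Q₁` and
`X ⊆ Q₂` into projectives, and use `Ext¹(X, Q₁) = 0` to embed `C' ⊆ Q₁ × Q₂` compatibly; then
`G/C ⊆ (Q₁ × Q₂)/C'` with cokernel in `𝒳`, so `(Q₁ × Q₂)/C'` is an `(n-1)`-syzygy. The theorem is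
the case `C' = C`, `X = 0`.
-/

open Function

section Syzygy

variable {R : Type u} [Ring R]

namespace FiniteExactSequenceTo

def ofSelf (M : Type u) [AddCommGroup M] [Module R M] : FiniteExactSequenceTo R M 0 where
  G := fun | 0 => M | _ + 1 => PUnit
  acg := fun | 0 => inferInstance | _ + 1 => inferInstance
  mod := fun | 0 => inferInstance | _ + 1 => inferInstance
  d _ := 0
  aug := LinearMap.id
  aug_surjective := surjective_id
  exact_aug := by rw [ker_id, range_eq_bot]
  exact _ := Subsingleton.elim _ _
  trivial_of_gt := fun | _ + 1, _ => inferInstance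

variable {M P : Type u} [AddCommGroup M] [Module R M] [AddCommGroup P] [Module R P] {n : ℕ}

def cons (p : P →ₗ[R] M) (hp : Surjective p) (E : FiniteExactSequenceTo R (ker p) n) :
    FiniteExactSequenceTo R M (n + 1) where
  G := fun | 0 => P | i + 1 => E.G i
  acg := fun | 0 => inferInstance | _ + 1 => inferInstance
  mod := fun | 0 => inferInstance | _ + 1 => inferInstance
  d := fun | 0 => (ker p).subtype ∘ₗ E.aug | i + 1 => E.d i
  aug := p
  aug_surjective := hp
  exact_aug := by
    rw [range_comp, range_eq_top.2 E.aug_surjective, Submodule.map_top, Submodule.range_subtype]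
  exact := fun
    | 0 => by
      change range (E.d 0) = ker ((ker p).subtype ∘ₗ E.aug)
      rw [ker_comp_of_ker_eq_bot _ (ker p).ker_subtype, E.exact_aug]
    | i + 1 => E.exact i
  trivial_of_gt := fun
    | 0, h => absurd h (Nat.not_lt_zero _)
    | i + 1, h => E.trivial_of_gt i (by omega)

def tail (E : FiniteExactSequenceTo R M (n + 1)) : FiniteExactSequenceTo R (ker E.aug) n where
  G i := E.G (i + 1)
  d i := E.d (i + 1)
  aug := (E.d 0).codRestrict (ker E.aug) fun x => E.exact_aug ▸ mem_range_self _ x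
  aug_surjective := fun ⟨y, hy⟩ => by
    obtain ⟨x, rfl⟩ := E.exact_aug.ge hy
    exact ⟨x, rfl⟩
  exact_aug := by rw [ker_codRestrict]; exact E.exact 0
  exact i := E.exact (i + 1)
  trivial_of_gt i h := E.trivial_of_gt (i + 1) (by omega)

end FiniteExactSequenceTo

variable (𝒞 : ∀ (X : Type u) [AddCommGroup X] [Module R X], Prop)

def IsSyzygyOf (n : ℕ) (A M : Type u) [AddCommGroup A] [Module R A] [AddCommGroup M]
    [Module R M] : Prop :=
  ∃ E : FiniteExactSequenceTo R M n, (∀ i < n, 𝒞 (E.G i)) ∧ Nonempty (A ≃ₗ[R] E.G n)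

def IsSyzygy (n : ℕ) (A : Type u) [AddCommGroup A] [Module R A] : Prop :=
  ∃ (M : Type u) (_ : AddCommGroup M) (_ : Module R M), IsSyzygyOf 𝒞 n A M

variable {𝒞} {n : ℕ} {A M : Type u} [AddCommGroup A] [Module R A] [AddCommGroup M] [Module R M]

lemma isSyzygyOf_zero_iff : IsSyzygyOf 𝒞 0 A M ↔ Nonempty (A ≃ₗ[R] M) := by
  refine ⟨fun ⟨E, _, ⟨e⟩⟩ => ?_, fun ⟨e⟩ => ⟨.ofSelf M, by simp, ⟨e⟩⟩⟩
  have : Subsingleton (E.G 1) := E.trivial_of_gt 1 zero_lt_one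
  have hinj : Injective E.aug := by
    rw [← ker_eq_bot, ← E.exact_aug, range_eq_bot]
    exact Subsingleton.elim _ _
  exact ⟨e.trans (LinearEquiv.ofBijective E.aug ⟨hinj, E.aug_surjective⟩)⟩

lemma isSyzygyOf_succ_iff_ker :
    IsSyzygyOf 𝒞 (n + 1) A M ↔ ∃ (P : Type u) (_ : AddCommGroup P) (_ : Module R P)
      (p : P →ₗ[R] M), 𝒞 P ∧ Surjective p ∧ IsSyzygyOf 𝒞 n A (ker p) := by
  constructor
  · rintro ⟨E, hE, he⟩
    exact ⟨E.G 0, _, _, E.aug, hE 0 n.succ_pos, E.aug_surjective, E.tail,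
      fun i hi => hE (i + 1) (by omega), he⟩
  · rintro ⟨P, _, _, p, hP, hp, E, hE, he⟩
    exact ⟨E.cons p hp, fun | 0, _ => hP | i + 1, hi => hE i (by omega), he⟩

lemma isSyzygyOf_succ_iff_quotient :
    IsSyzygyOf 𝒞 (n + 1) A M ↔ ∃ (P : Type u) (_ : AddCommGroup P) (_ : Module R P)
      (f : A →ₗ[R] P), 𝒞 P ∧ Injective f ∧ IsSyzygyOf 𝒞 n (P ⧸ range f) M := by
  induction n generalizing M with
  | zero =>
    simp only [isSyzygyOf_succ_iff_ker, isSyzygyOf_zero_iff]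
    constructor
    · rintro ⟨P, _, _, p, hP, hp, ⟨e⟩⟩
      have hexact : Exact ((ker p).subtype ∘ₗ e.toLinearMap) p :=
        (LinearEquiv.precomp_exact_iff_exact ..).2 (exact_subtype_ker_map p)
      exact ⟨P, _, _, _, hP, (ker p).injective_subtype.comp e.injective,
        ⟨hexact.linearEquivOfSurjective hp⟩⟩
    · rintro ⟨P, _, _, f, hP, hf, ⟨e⟩⟩
      have hexact : Exact f (e.toLinearMap ∘ₗ (range f).mkQ) :=
        (LinearEquiv.postcomp_exact_iff_exact ..).2 (exact_map_mkQ_range f)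
      exact ⟨P, _, _, _, hP, e.surjective.comp (range f).mkQ_surjective,
        ⟨(LinearEquiv.ofInjective f hf).trans (.ofEq _ _ hexact.linearMap_ker_eq.symm)⟩⟩
  | succ n ih =>
    simp only [isSyzygyOf_succ_iff_ker (n := n + 1), ih, isSyzygyOf_succ_iff_ker (n := n)]
    constructor
    · rintro ⟨P₀, _, _, p, hP₀, hp, P, _, _, f, hP, hf, h⟩
      exact ⟨P, _, _, f, hP, hf, P₀, _, _, p, hP₀, hp, h⟩
    · rintro ⟨P, _, _, f, hP, hf, P₀, _, _, p, hP₀, hp, h⟩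
      exact ⟨P₀, _, _, p, hP₀, hp, P, _, _, f, hP, hf, h⟩

lemma isSyzygy_zero : IsSyzygy 𝒞 0 A :=
  ⟨A, _, _, isSyzygyOf_zero_iff.2 ⟨.refl R A⟩⟩

lemma isSyzygy_succ_iff :
    IsSyzygy 𝒞 (n + 1) A ↔ ∃ (P : Type u) (_ : AddCommGroup P) (_ : Module R P)
      (f : A →ₗ[R] P), 𝒞 P ∧ Injective f ∧ IsSyzygy 𝒞 n (P ⧸ range f) := by
  simp only [IsSyzygy, isSyzygyOf_succ_iff_quotient]
  constructor
  · rintro ⟨M, _, _, P, _, _, f, hP, hf, h⟩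
    exact ⟨P, _, _, f, hP, hf, M, _, _, h⟩
  · rintro ⟨P, _, _, f, hP, hf, M, _, _, h⟩
    exact ⟨M, _, _, P, _, _, f, hP, hf, h⟩

lemma IsSyzygy.mono {𝒟 : ∀ (X : Type u) [AddCommGroup X] [Module R X], Prop}
    (h𝒞𝒟 : ∀ (X : Type u) [AddCommGroup X] [Module R X], 𝒞 X → 𝒟 X) (h : IsSyzygy 𝒞 n A) :
    IsSyzygy 𝒟 n A :=
  let ⟨M, _, _, E, hE, he⟩ := h
  ⟨M, _, _, E, fun i hi => h𝒞𝒟 (E.G i) (hE i hi), he⟩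

lemma isNSyzygy_iff_isSyzygy : IsNSyzygy R n A ↔
    IsSyzygy (fun (X : Type u) [AddCommGroup X] [Module R X] => Module.Projective R X) n A :=
  Iff.rfl

lemma isGorensteinNSyzygy_iff_isSyzygy :
    IsGorensteinNSyzygy R n A ↔ IsSyzygy (IsGorensteinProjective R) n A :=
  Iff.rfl

end Syzygy

section Ext

variable {R : Type u} [Ring R]

lemma Function.Exact.exists_lift_of_comp_eq_zero {K C H M : Type*} [AddCommGroup K]
    [Module R K] [AddCommGroup C] [Module R C] [AddCommGroup H] [Module R H] [AddCommGroup M]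
    [Module R M] {i : K →ₗ[R] C} {p : C →ₗ[R] H} (h : Exact i p) (hi : Injective i)
    (g : M →ₗ[R] C) (hg : p ∘ₗ g = 0) : ∃ τ : M →ₗ[R] K, i ∘ₗ τ = g := by
  have hmem : ∀ x, g x ∈ range i := fun x => h.linearMap_ker_eq ▸ congr($hg x)
  refine ⟨(LinearEquiv.ofInjective i hi).symm.toLinearMap ∘ₗ g.codRestrict _ hmem, ?_⟩
  ext x
  simp only [LinearMap.coe_comp, Function.comp_apply, LinearEquiv.coe_coe]
  exact congr(Subtype.val $((LinearEquiv.ofInjective i hi).apply_symm_apply ⟨g x, hmem x⟩))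

lemma LinearMap.exists_comp_eq_of_ker_le {C D Q : Type*} [AddCommGroup C] [Module R C]
    [AddCommGroup D] [Module R D] [AddCommGroup Q] [Module R Q] {s : C →ₗ[R] D}
    (hs : Surjective s) {t : C →ₗ[R] Q} (h : ker s ≤ ker t) : ∃ Φ : D →ₗ[R] Q, Φ ∘ₗ s = t :=
  ⟨(ker s).liftQ t h ∘ₗ (s.quotKerEquivOfSurjective hs).symm.toLinearMap, by
    ext x
    simp [quotKerEquivOfSurjective_symm_apply]⟩

variable (R) in
/-- `Ext¹(H, Q) = 0` for every projective `Q`, in the form: every map `K → Q` extends along every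
monomorphism `K → C` with cokernel `H`. -/
def ExtOneVanishesOnProjectives (H : Type u) [AddCommGroup H] [Module R H] : Prop :=
  ∀ ⦃K C Q : Type u⦄ [AddCommGroup K] [Module R K] [AddCommGroup C] [Module R C]
    [AddCommGroup Q] [Module R Q] [Module.Projective R Q] (i : K →ₗ[R] C) (p : C →ₗ[R] H),
    Injective i → Surjective p → Exact i p → ∀ φ : K →ₗ[R] Q, ∃ Φ : C →ₗ[R] Q, Φ ∘ₗ i = φ

namespace ExtOneVanishesOnProjectives

lemma of_presentation {K₀ P₀ H : Type u} [AddCommGroup K₀] [Module R K₀] [AddCommGroup P₀]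
    [Module R P₀] [Module.Projective R P₀] [AddCommGroup H] [Module R H] {i₀ : K₀ →ₗ[R] P₀}
    {ε : P₀ →ₗ[R] H} (hε : Surjective ε) (hexact : Exact i₀ ε)
    (hext : ∀ (Q : Type u) [AddCommGroup Q] [Module R Q] [Module.Projective R Q]
      (ψ : K₀ →ₗ[R] Q), ∃ g : P₀ →ₗ[R] Q, g ∘ₗ i₀ = ψ) :
    ExtOneVanishesOnProjectives R H := by
  intro K C Q _ _ _ _ _ _ _ i p hi hp hip φ
  obtain ⟨σ, hσ⟩ := Module.projective_lifting_property p ε hp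
  obtain ⟨τ, hτ⟩ := hip.exists_lift_of_comp_eq_zero hi (σ ∘ₗ i₀) (by
    rw [← LinearMap.comp_assoc, hσ, hexact.linearMap_comp_eq_zero])
  obtain ⟨g, hg⟩ := hext Q (φ ∘ₗ τ)
  -- `Φ` is `g` on the image of `σ` and `φ` on the image of `i`; these two images span `C`.
  have hs : Surjective (σ.coprod i) := fun c => by
    obtain ⟨x, hx⟩ := hε (p c)
    obtain ⟨k, hk⟩ := (hip (c - σ x)).1 (by rw [map_sub, ← hx, ← hσ]; simp)
    exact ⟨(x, k), by simp [hk]⟩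
  have hker : ker (σ.coprod i) ≤ ker (g.coprod φ) := by
    rintro ⟨x, k⟩ hxk
    replace hxk : σ x + i k = 0 := hxk
    obtain ⟨k₀, rfl⟩ := (hexact x).1 (by
      rw [← hσ, LinearMap.comp_apply, eq_neg_of_add_eq_zero_left hxk, map_neg,
        hip.apply_apply_eq_zero, neg_zero])
    have hτk : τ k₀ + k = 0 := hi (by
      rw [map_add, ← LinearMap.comp_apply i τ, hτ, LinearMap.comp_apply, hxk, map_zero])
    change g (i₀ k₀) + φ k = 0
    rw [← LinearMap.comp_apply g, hg, LinearMap.comp_apply, ← map_add, hτk, map_zero]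
  obtain ⟨Φ, hΦ⟩ := exists_comp_eq_of_ker_le hs hker
  exact ⟨Φ, by rw [← coprod_inr σ i, ← LinearMap.comp_assoc, hΦ, coprod_inr]⟩

lemma of_extension {X' X X'' : Type u} [AddCommGroup X'] [Module R X'] [AddCommGroup X]
    [Module R X] [AddCommGroup X''] [Module R X''] {a : X' →ₗ[R] X} {b : X →ₗ[R] X''}
    (ha : Injective a) (hb : Surjective b) (hab : Exact a b)
    (h' : ExtOneVanishesOnProjectives R X') (h'' : ExtOneVanishesOnProjectives R X'') :
    ExtOneVanishesOnProjectives R X := by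
  intro K C Q _ _ _ _ _ _ _ i p hi hp hip φ
  -- Extend `φ` first to `C₁ = p⁻¹(X')`, an extension of `X'` by `K`, then to `C`.
  set C₁ := ker (b ∘ₗ p)
  have hiC₁ : ∀ k, i k ∈ C₁ := fun k => by simp [C₁, hip.apply_apply_eq_zero]
  obtain ⟨p₁, hp₁⟩ := hab.exists_lift_of_comp_eq_zero ha (p ∘ₗ C₁.subtype) (by
    ext c
    exact c.2)
  have hp₁c : ∀ c : C₁, a (p₁ c) = p c := fun c => congr($hp₁ c)
  have hexact₁ : Exact (i.codRestrict C₁ hiC₁) p₁ := fun c => by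
    rw [← (injective_iff_map_eq_zero' a).1 ha, hp₁c, hip c]
    exact ⟨fun ⟨k, hk⟩ => ⟨k, Subtype.ext hk⟩, fun ⟨k, hk⟩ => ⟨k, congr($hk.1)⟩⟩
  have hsurj₁ : Surjective p₁ := fun x' => by
    obtain ⟨c, hc⟩ := hp (a x')
    have hc₁ : c ∈ C₁ := by simp [C₁, hc, hab.apply_apply_eq_zero]
    exact ⟨⟨c, hc₁⟩, ha (by rw [hp₁c, hc])⟩
  obtain ⟨Φ₁, hΦ₁⟩ := h' _ p₁ ((injective_codRestrict_iff hiC₁).2 hi) hsurj₁ hexact₁ φ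
  obtain ⟨Φ, hΦ⟩ := h'' C₁.subtype (b ∘ₗ p) C₁.injective_subtype (hb.comp hp)
    (exact_subtype_ker_map _) Φ₁
  exact ⟨Φ, by rw [← hΦ₁, ← hΦ, LinearMap.comp_assoc, subtype_comp_codRestrict]⟩

end ExtOneVanishesOnProjectives

end Ext

section Gorenstein

variable {R : Type u} [Ring R] {G H : Type u} [AddCommGroup G] [Module R G] [AddCommGroup H]
  [Module R H]

lemma Module.Projective.isGorensteinProjective [Module.Projective R G] :
    IsGorensteinProjective R G := by
  let d : G × G →ₗ[R] G × G := inr R G G ∘ₗ fst R G G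
  have hrange : range d = range (inr R G G) :=
    range_comp_of_range_eq_top _ (range_eq_top.2 fst_surjective)
  refine ⟨{
    P _ := G × G
    projective _ := inferInstance
    d _ := d
    exact _ := ?_
    homExact _ _ _ _ _ f hf := ⟨f ∘ₗ inl R G G ∘ₗ snd R G G, ?_⟩
    equiv := ⟨(LinearEquiv.ofInjective _ inr_injective).trans (.ofEq _ _ hrange.symm)⟩ }⟩
  · rw [hrange, ker_comp_of_ker_eq_bot _ (ker_eq_bot.2 inr_injective), ker_fst]
  · refine prod_ext (by ext x; simp [d]) ?_
    ext y
    simpa [d, Prod.mk_zero_zero] using congr($hf (y, 0)).symm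

namespace CompleteProjectiveResolution

variable (res : CompleteProjectiveResolution R G)

def shift : CompleteProjectiveResolution R (range (res.d 1)) where
  P i := res.P (i + 1)
  projective i := res.projective (i + 1)
  d i := res.d (i + 1)
  exact i := res.exact (i + 1)
  homExact Q _ _ hQ i := res.homExact Q hQ (i + 1)
  equiv := ⟨.refl R _⟩

lemma exists_comp_subtype_eq (i : ℤ) {Q : Type u} [AddCommGroup Q] [Module R Q]
    [Module.Projective R Q] (ψ : range (res.d (i + 1)) →ₗ[R] Q) :
    ∃ g : res.P (i + 1 + 1) →ₗ[R] Q, g ∘ₗ (range (res.d (i + 1))).subtype = ψ := by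
  have hzero : (ψ ∘ₗ (res.d (i + 1)).rangeRestrict) ∘ₗ res.d i = 0 := by
    ext x
    have : (res.d (i + 1)).rangeRestrict (res.d i x) = 0 :=
      Subtype.ext ((res.exact i).le (mem_range_self _ x))
    simp [this]
  obtain ⟨g, hg⟩ := res.homExact Q inferInstance i _ hzero
  exact ⟨g, (cancel_right (res.d (i + 1)).surjective_rangeRestrict).1 hg⟩

end CompleteProjectiveResolution

namespace IsGorensteinProjective

lemma of_linearEquiv (e : G ≃ₗ[R] H) (h : IsGorensteinProjective R G) :
    IsGorensteinProjective R H :=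
  let ⟨res⟩ := h
  let ⟨e₀⟩ := res.equiv
  ⟨{ res with equiv := ⟨e.symm.trans e₀⟩ }⟩

lemma exists_injective_into_projective (h : IsGorensteinProjective R G) :
    ∃ (Q : Type u) (_ : AddCommGroup Q) (_ : Module R Q) (ι : G →ₗ[R] Q),
      Module.Projective R Q ∧ Injective ι ∧ IsGorensteinProjective R (Q ⧸ range ι) := by
  obtain ⟨res⟩ := h
  obtain ⟨e⟩ := res.equiv
  have hrange : range ((range (res.d 0)).subtype ∘ₗ e.toLinearMap) = ker (res.d 1) := by
    rw [range_comp, e.range, Submodule.map_top, Submodule.range_subtype]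
    exact res.exact 0
  refine ⟨res.P 1, _, _, (range (res.d 0)).subtype ∘ₗ e.toLinearMap, res.projective 1,
    (range (res.d 0)).injective_subtype.comp e.injective, ?_⟩
  rw [hrange]
  exact of_linearEquiv (res.d 1).quotKerEquivRange.symm ⟨res.shift⟩

lemma extOneVanishesOnProjectives (h : IsGorensteinProjective R G) :
    ExtOneVanishesOnProjectives R G := by
  obtain ⟨res⟩ := h
  obtain ⟨e⟩ := res.equiv
  have := res.projective 0
  have hexact : Exact (range (res.d (-1))).subtype
      (e.symm.toLinearMap ∘ₗ (res.d 0).rangeRestrict) := by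
    rw [LinearEquiv.postcomp_exact_iff_exact, exact_iff, ker_rangeRestrict,
      Submodule.range_subtype]
    exact (res.exact (-1)).symm
  -- `-2 + 1` and `-2 + 1 + 1` reduce to `-1` and `0`.
  exact .of_presentation (P₀ := res.P 0)
    (e.symm.surjective.comp (res.d 0).surjective_rangeRestrict) hexact
    fun Q _ _ _ ψ => (res.exists_comp_subtype_eq (-2) ψ :)

end IsGorensteinProjective

end Gorenstein

section Closure

variable {R : Type u} [Ring R]

/-- Working in this class rather than with Gorenstein projectives avoids proving that the latter
are closed under extensions. -/
inductive GPExtClosure (R : Type u) [Ring R] : ∀ (X : Type u) [AddCommGroup X] [Module R X], Prop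
  | of_isGorensteinProjective {X : Type u} [AddCommGroup X] [Module R X] :
      IsGorensteinProjective R X → GPExtClosure R X
  | of_extension {X' X X'' : Type u} [AddCommGroup X'] [Module R X'] [AddCommGroup X]
      [Module R X] [AddCommGroup X''] [Module R X''] {a : X' →ₗ[R] X} {b : X →ₗ[R] X''} :
      Injective a → Surjective b → Exact a b → GPExtClosure R X' → GPExtClosure R X'' →
      GPExtClosure R X

variable {X' X X'' Q' Q'' : Type u} [AddCommGroup X'] [Module R X'] [AddCommGroup X]
  [Module R X] [AddCommGroup X''] [Module R X''] [AddCommGroup Q'] [Module R Q']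
  [AddCommGroup Q''] [Module R Q''] {a : X' →ₗ[R] X} {b : X →ₗ[R] X''} {κ'' : X'' →ₗ[R] Q''}

lemma LinearMap.injective_prod_of_exact (φ : X →ₗ[R] Q') (hab : Exact a b)
    (hκ'' : Injective κ'') (hφa : Injective (φ ∘ₗ a)) : Injective (φ.prod (κ'' ∘ₗ b)) := by
  refine (injective_iff_map_eq_zero _).2 fun x hx => ?_
  obtain ⟨x', rfl⟩ := (hab x).1 ((injective_iff_map_eq_zero' κ'').1 hκ'' _ |>.1 congr($hx.2))
  have hx' : x' = 0 := hφa (by simpa using congr($hx.1))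
  rw [hx', map_zero]

namespace GPExtClosure

lemma extOneVanishesOnProjectives (h : GPExtClosure R X) : ExtOneVanishesOnProjectives R X := by
  induction h with
  | of_isGorensteinProjective h => exact h.extOneVanishesOnProjectives
  | of_extension ha hb hab _ _ h' h'' => exact .of_extension ha hb hab h' h''

lemma horseshoe (φ : X →ₗ[R] Q') (hab : Exact a b) (hb : Surjective b)
    (hκ'' : Injective κ'') {W : Submodule R Q'} (hW : range (φ ∘ₗ a) ≤ W)
    (hQ' : GPExtClosure R (Q' ⧸ W)) (hQ'' : GPExtClosure R (Q'' ⧸ range κ'')) :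
    GPExtClosure R ((Q' × Q'') ⧸ (range (φ.prod (κ'' ∘ₗ b)) ⊔ W.map (inl R Q' Q''))) := by
  set N := range (φ.prod (κ'' ∘ₗ b)) ⊔ W.map (inl R Q' Q'')
  have hinl : W ≤ N.comap (inl R Q' Q'') := fun w hw => Submodule.mem_sup_right ⟨w, hw, rfl⟩
  have hsnd : N ≤ (range κ'').comap (snd R Q' Q'') := by
    refine sup_le ?_ ?_
    · rintro _ ⟨x, rfl⟩
      exact ⟨b x, rfl⟩
    · rintro _ ⟨w, -, rfl⟩
      exact ⟨0, by simp⟩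
  have hu : Injective (W.mapQ N _ hinl) := by
    refine (injective_iff_map_eq_zero _).2 fun y hy => ?_
    obtain ⟨q', rfl⟩ := Submodule.Quotient.mk_surjective _ y
    rw [Submodule.mapQ_apply, Submodule.Quotient.mk_eq_zero] at hy
    obtain ⟨_, ⟨x, rfl⟩, _, ⟨w, hw, rfl⟩, hxw⟩ := Submodule.mem_sup.1 hy
    obtain ⟨x', rfl⟩ := (hab x).1 (hκ'' (by simpa using congr($hxw.2)))
    have hq' : q' = φ (a x') + w := by simpa using congr($hxw.1).symm
    rw [Submodule.Quotient.mk_eq_zero, hq']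
    exact W.add_mem (hW ⟨x', rfl⟩) hw
  have hv : Surjective (N.mapQ (range κ'') _ hsnd) := by
    rintro ⟨q''⟩
    exact ⟨Submodule.Quotient.mk (0, q''), rfl⟩
  have huv : Exact (W.mapQ N _ hinl) (N.mapQ (range κ'') _ hsnd) := by
    refine (Exact.inl_snd.exact_mapQ_iff hinl hsnd).2 ?_
    rintro _ ⟨-, x'', rfl⟩
    obtain ⟨x, rfl⟩ := hb x''
    exact ⟨_, Submodule.mem_sup_left (mem_range_self _ x), rfl⟩
  exact of_extension hu hv huv hQ' hQ''

lemma exists_injective_into_projective (h : GPExtClosure R X) :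
    ∃ (Q : Type u) (_ : AddCommGroup Q) (_ : Module R Q) (ι : X →ₗ[R] Q),
      Module.Projective R Q ∧ Injective ι ∧ GPExtClosure R (Q ⧸ range ι) := by
  induction h with
  | of_isGorensteinProjective h =>
    obtain ⟨Q, _, _, ι, hQ, hι, hQι⟩ := h.exists_injective_into_projective
    exact ⟨Q, _, _, ι, hQ, hι, of_isGorensteinProjective hQι⟩
  | @of_extension X' X X'' _ _ _ _ _ _ a b ha hb hab _ hX'' ih' ih'' =>
    obtain ⟨Q', _, _, κ', hQ', hκ', hQ'X'⟩ := ih'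
    obtain ⟨Q'', _, _, κ'', hQ'', hκ'', hQ''X''⟩ := ih''
    obtain ⟨φ, rfl⟩ := hX''.extOneVanishesOnProjectives a b ha hb hab κ'
    have hN : range (φ.prod (κ'' ∘ₗ b)) ⊔ (range (φ ∘ₗ a)).map (inl R Q' Q'') =
        range (φ.prod (κ'' ∘ₗ b)) := by
      refine sup_eq_left.2 ?_
      rintro _ ⟨_, ⟨x', rfl⟩, rfl⟩
      exact ⟨a x', by simp [hab.apply_apply_eq_zero]⟩
    have hQ := horseshoe φ hab hb hκ'' le_rfl hQ'X' hQ''X''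
    rw [hN] at hQ
    exact ⟨Q' × Q'', _, _, _, inferInstance, injective_prod_of_exact φ hab hκ'' hκ', hQ⟩

end GPExtClosure

end Closure

lemma isNSyzygy_of_isGorensteinNSyzygy_of_exact {R : Type u} [Ring R] {n : ℕ} {C C' X : Type u}
    [AddCommGroup C] [Module R C] [AddCommGroup C'] [Module R C'] [AddCommGroup X] [Module R X]
    {ι : C →ₗ[R] C'} {π : C' →ₗ[R] X} (hι : Injective ι) (hπ : Surjective π) (hιπ : Exact ι π)
    (hX : GPExtClosure R X) (hC : IsGorensteinNSyzygy R n C) : IsNSyzygy R n C' := by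
  induction n generalizing C C' X with
  | zero => exact isNSyzygy_iff_isSyzygy.2 isSyzygy_zero
  | succ n ih =>
    rw [isGorensteinNSyzygy_iff_isSyzygy, isSyzygy_succ_iff] at hC
    obtain ⟨G, _, _, f, hG, hf, hGC⟩ := hC
    obtain ⟨Q₁, _, _, κ, hQ₁, hκ, hQ₁G⟩ := hG.exists_injective_into_projective
    obtain ⟨Q₂, _, _, κ'', hQ₂, hκ'', hQ₂X⟩ := hX.exists_injective_into_projective
    obtain ⟨φ, hφ⟩ := hX.extOneVanishesOnProjectives ι π hι hπ hιπ (κ ∘ₗ f)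
    have hφc : ∀ c, φ (ι c) = κ (f c) := fun c => congr($hφ c)
    set Ψ := φ.prod (κ'' ∘ₗ π)
    set N := range Ψ ⊔ (range κ).map (inl R Q₁ Q₂)
    have hΨ : Injective Ψ := injective_prod_of_exact φ hιπ hκ'' (hφ ▸ hκ.comp hf)
    have hN : GPExtClosure R ((Q₁ × Q₂) ⧸ N) :=
      .horseshoe φ hιπ hπ hκ'' (hφ ▸ range_comp_le_range f κ)
        (.of_isGorensteinProjective hQ₁G) hQ₂X
    have hfΨ : range f ≤ (range Ψ).comap (inl R Q₁ Q₂ ∘ₗ κ) := by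
      rintro _ ⟨c, rfl⟩
      exact ⟨ι c, by simp [Ψ, hφc, hιπ.apply_apply_eq_zero]⟩
    set j := (range f).mapQ (range Ψ) _ hfΨ
    have hj : Injective j := by
      refine (injective_iff_map_eq_zero _).2 fun y hy => ?_
      obtain ⟨g, rfl⟩ := Submodule.Quotient.mk_surjective _ y
      obtain ⟨c', hc'⟩ := (Submodule.Quotient.mk_eq_zero _).1 hy
      obtain ⟨c, rfl⟩ := (hιπ c').1 (hκ'' (by simpa [Ψ] using congr($hc'.2)))
      rw [Submodule.Quotient.mk_eq_zero]
      exact ⟨c, hκ (by simpa [Ψ, hφc] using congr($hc'.1))⟩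
    have hjN : Exact j (Submodule.factor (le_sup_left : range Ψ ≤ N)) := by
      rw [exact_iff, Submodule.factor, Submodule.mapQ, Submodule.ker_liftQ, LinearMap.comp_id,
        Submodule.ker_mkQ, Submodule.range_mapQ, Submodule.map_sup, Submodule.mkQ_map_self,
        bot_sup_eq, range_comp]
    rw [isNSyzygy_iff_isSyzygy, isSyzygy_succ_iff]
    exact ⟨Q₁ × Q₂, _, _, Ψ, inferInstance, hΨ, ih hj (Submodule.factor_surjective _) hjN hN hGC⟩

theorem isNSyzygy_iff_isGorensteinNSyzygy_general
    (R : Type u) [Ring R] (n : ℕ)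
    (A : Type u) [AddCommGroup A] [Module R A] :
    IsNSyzygy R n A ↔ IsGorensteinNSyzygy R n A :=
  ⟨fun h => isGorensteinNSyzygy_iff_isSyzygy.2 <| (isNSyzygy_iff_isSyzygy.1 h).mono
      fun X _ _ (_ : Module.Projective R X) => Module.Projective.isGorensteinProjective,
    isNSyzygy_of_isGorensteinNSyzygy_of_exact (ι := LinearMap.id)
      (π := (0 : A →ₗ[R] PUnit.{u + 1})) injective_id (fun _ => ⟨0, rfl⟩)
      ((exact_zero_iff_surjective _ _).2 surjective_id)
      (.of_isGorensteinProjective Module.Projective.isGorensteinProjective)⟩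

/-- For any ring `R` and positive integer `n`, a left `R`-module is an
`n`-syzygy module if and only if it is a Gorenstein `n`-syzygy module. -/
theorem isNSyzygy_iff_isGorensteinNSyzygy
    (R : Type u) [Ring R] (n : ℕ) (hn : 0 < n)
    (A : Type u) [AddCommGroup A] [Module R A] :
    IsNSyzygy R n A ↔ IsGorensteinNSyzygy R n A :=
  isNSyzygy_iff_isGorensteinNSyzygy_general R n A
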